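/- Let (X, Y) have the bivariate normal distribution with mean (μm, μM) and covariance [[σm², c], [c, σM²]], and let ε be an independent N(0, σn²) random variable with σn > 0. Set σ̃ = √(σm² + σn²), u_n(x) = c(x − μm)/σ̃² + μM, and s_n = √(σM² − c²/σ̃²). Then the conditional distribution of Y' = X + ε given the event {Y ≤ f_*} has density x ↦ Φ((f_* − u_n(x))/s_n) · φ((x − μm)/σ̃) / (σ̃ Φ((f_* − μM)/σM)); i.e., for every Borel set A ⊆ ℝ, P(X + ε ∈ A and Y ≤ f_*) / P(Y ≤ f_*) equals the integral of this density over A. -/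

import Mathlib

open MeasureTheory Real Set Matrix

/-- The standard normal probability density function. -/
noncomputable def stdPdf (t : ℝ) : ℝ := (Real.sqrt (2 * π))⁻¹ * Real.exp (-t ^ 2 / 2)

/-- The standard normal cumulative distribution function. -/
noncomputable def stdCdf (t : ℝ) : ℝ := ∫ u in Iic t, stdPdf u

/-- The bivariate normal density on `ℝ²` with mean vector `(μm, μM)` and covariance matrix
`Σ = [[σm², c], [c, σM²]]`. -/
noncomputable def bivDensity (μm μM σm σM c : ℝ) (x y : ℝ) : ℝ :=
  (2 * π)⁻¹ * (Real.sqrt (!![σm ^ 2, c; c, σM ^ 2] : Matrix (Fin 2) (Fin 2) ℝ).det)⁻¹ *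
    Real.exp (-(1 / 2) *
      ((![x, y] - ![μm, μM]) ⬝ᵥ ((!![σm ^ 2, c; c, σM ^ 2] : Matrix (Fin 2) (Fin 2) ℝ)⁻¹ *ᵥ
        (![x, y] - ![μm, μM]))))

/-- `σ̃ = √(σm² + σn²)`. -/
noncomputable def sigmaTilde (σm σn : ℝ) : ℝ := Real.sqrt (σm ^ 2 + σn ^ 2)

/-- `u_n(x) = c(x − μm)/σ̃² + μM`. -/
noncomputable def condMeanNoisy (μm μM σm σn c x : ℝ) : ℝ :=
  c * (x - μm) / sigmaTilde σm σn ^ 2 + μM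

/-- `s_n = √(σM² − c²/σ̃²)`. -/
noncomputable def condSdNoisy (σm σM σn c : ℝ) : ℝ :=
  Real.sqrt (σM ^ 2 - c ^ 2 / sigmaTilde σm σn ^ 2)

/-!
Because `ε` is independent of `(X, Y)`, the pair `(X + ε, Y)` is again bivariate normal, with
`σm²` replaced by `σ̃² = σm² + σn²`: given `Y = y`, `X` is normal with variance `σm² − c²/σM²`, and
adding `ε` convolves this with `N(0, σn²)`. Factoring a bivariate normal density as the density of
its first coordinate times the conditional density of the second then gives
`P(X + ε ∈ A, Y ≤ f_*) = ∫_A φ_σ̃(x − μm) Φ((f_* − u_n(x))/s_n) dx`, while `P(Y ≤ f_*)` is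
`Φ((f_* − μM)/σM)`.
-/

section

open ProbabilityTheory
open scoped ENNReal

noncomputable def normPdf (σ z : ℝ) : ℝ := stdPdf (z / σ) / σ

lemma stdPdf_pos (t : ℝ) : 0 < stdPdf t := by unfold stdPdf; positivity

@[fun_prop] lemma continuous_normPdf (σ : ℝ) : Continuous (normPdf σ) := by
  unfold normPdf stdPdf; fun_prop

@[fun_prop] lemma measurable_normPdf (σ : ℝ) : Measurable (normPdf σ) :=
  (continuous_normPdf σ).measurable

lemma normPdf_nonneg {σ : ℝ} (hσ : 0 < σ) (z : ℝ) : 0 ≤ normPdf σ z :=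
  div_nonneg (stdPdf_pos _).le hσ.le

lemma toNNReal_sq_ne_zero {σ : ℝ} (hσ : 0 < σ) : (σ ^ 2).toNNReal ≠ 0 := by
  simpa using hσ.ne'

lemma normPdf_sub_eq_gaussianPDFReal {σ : ℝ} (hσ : 0 < σ) (μ x : ℝ) :
    normPdf σ (x - μ) = gaussianPDFReal μ (σ ^ 2).toNNReal x := by
  rw [normPdf, stdPdf, gaussianPDFReal, Real.coe_toNNReal _ (sq_nonneg σ),
    Real.sqrt_mul' _ (sq_nonneg σ), Real.sqrt_sq hσ.le, div_pow]
  field_simp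

lemma gaussianReal_eq_withDensity_normPdf {σ : ℝ} (hσ : 0 < σ) (μ : ℝ) :
    gaussianReal μ (σ ^ 2).toNNReal =
      volume.withDensity fun x => ENNReal.ofReal (normPdf σ (x - μ)) := by
  simp_rw [gaussianReal_of_var_ne_zero _ (toNNReal_sq_ne_zero hσ), gaussianPDF_def,
    normPdf_sub_eq_gaussianPDFReal hσ]

lemma lintegral_normPdf_sub {σ : ℝ} (hσ : 0 < σ) (μ : ℝ) :
    ∫⁻ x, ENNReal.ofReal (normPdf σ (x - μ)) = 1 := by
  simp_rw [normPdf_sub_eq_gaussianPDFReal hσ]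
  exact lintegral_gaussianPDFReal_eq_one μ (toNNReal_sq_ne_zero hσ)

lemma ofReal_stdCdf (t : ℝ) : ENNReal.ofReal (stdCdf t) = gaussianReal 0 1 (Iic t) := by
  rw [gaussianReal_apply_eq_integral _ one_ne_zero, stdCdf]
  congr 2 with u
  simp [gaussianPDFReal, stdPdf]

lemma stdCdf_nonneg (t : ℝ) : 0 ≤ stdCdf t := integral_nonneg fun u => (stdPdf_pos u).le

lemma stdCdf_le_one (t : ℝ) : stdCdf t ≤ 1 := by
  rw [← ENNReal.ofReal_le_one, ofReal_stdCdf]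
  exact prob_le_one

lemma stdCdf_pos (t : ℝ) : 0 < stdCdf t := by
  rw [← ENNReal.ofReal_pos, ofReal_stdCdf, pos_iff_ne_zero]
  exact fun h => by simpa using gaussianReal_absolutelyContinuous' 0 one_ne_zero h

lemma monotone_stdCdf : Monotone stdCdf := fun s t hst => by
  rw [← ENNReal.ofReal_le_ofReal_iff (stdCdf_nonneg t), ofReal_stdCdf, ofReal_stdCdf]
  exact measure_mono (Iic_subset_Iic.2 hst)

@[fun_prop] lemma measurable_stdCdf : Measurable stdCdf := monotone_stdCdf.measurable

lemma gaussianReal_Iic {σ : ℝ} (hσ : 0 < σ) (μ f : ℝ) :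
    gaussianReal μ (σ ^ 2).toNNReal (Iic f) = ENNReal.ofReal (stdCdf ((f - μ) / σ)) := by
  have hstd : gaussianReal μ (σ ^ 2).toNNReal = (gaussianReal 0 1).map (fun u => σ * u + μ) := by
    rw [← Function.comp_def (· + μ) (σ * ·),
      ← Measure.map_map (measurable_add_const μ) (measurable_const_mul σ),
      gaussianReal_map_const_mul, gaussianReal_map_add_const]
    congr 1
    · ring
    · ext; simp [sq_nonneg]
  rw [hstd, Measure.map_apply (by fun_prop) measurableSet_Iic, ofReal_stdCdf]
  congr 1 with u
  simp only [mem_preimage, mem_Iic, le_div_iff₀ hσ]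
  constructor <;> intro h <;> linarith

lemma setLIntegral_normPdf_sub_Iic {σ : ℝ} (hσ : 0 < σ) (μ f : ℝ) :
    ∫⁻ y in Iic f, ENNReal.ofReal (normPdf σ (y - μ)) = ENNReal.ofReal (stdCdf ((f - μ) / σ)) := by
  rw [← gaussianReal_Iic hσ, gaussianReal_eq_withDensity_normPdf hσ,
    withDensity_apply _ measurableSet_Iic]

lemma sq_sub_sq_div_sq_pos {σ₁ σ₂ c : ℝ} (h₁ : 0 < σ₁) (hc : c ^ 2 < σ₁ ^ 2 * σ₂ ^ 2) :
    0 < σ₂ ^ 2 - c ^ 2 / σ₁ ^ 2 := by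
  rw [sub_pos, div_lt_iff₀ (by positivity)]
  linarith

lemma sq_lt_sqrt_add_sq_sq_mul_sq {σ₁ σ₂ c σₙ : ℝ} (h₂ : 0 < σ₂) (hₙ : 0 < σₙ)
    (hc : c ^ 2 < σ₁ ^ 2 * σ₂ ^ 2) : c ^ 2 < √(σ₁ ^ 2 + σₙ ^ 2) ^ 2 * σ₂ ^ 2 := by
  rw [sq_sqrt (by positivity)]
  nlinarith [mul_pos (pow_pos hₙ 2) (pow_pos h₂ 2)]

lemma normPdf_mul_normPdf (σ₁ σ₂ z₁ z₂ : ℝ) :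
    normPdf σ₁ z₁ * normPdf σ₂ z₂ =
      (2 * π)⁻¹ / (σ₁ * σ₂) * exp (-((z₁ / σ₁) ^ 2 + (z₂ / σ₂) ^ 2) / 2) := by
  have h2π : (2 * π)⁻¹ = (√(2 * π))⁻¹ * (√(2 * π))⁻¹ := by
    rw [← mul_inv, mul_self_sqrt (by positivity)]
  rw [h2π, normPdf, normPdf, stdPdf, stdPdf, neg_add, add_div, exp_add]
  ring

lemma normPdf_mul_normPdf_eq_of {σ₁ σ₂ τ₁ τ₂ z₁ z₂ w₁ w₂ : ℝ} (hσ : σ₁ * σ₂ = τ₁ * τ₂)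
    (hz : (z₁ / σ₁) ^ 2 + (z₂ / σ₂) ^ 2 = (w₁ / τ₁) ^ 2 + (w₂ / τ₂) ^ 2) :
    normPdf σ₁ z₁ * normPdf σ₂ z₂ = normPdf τ₁ w₁ * normPdf τ₂ w₂ := by
  rw [normPdf_mul_normPdf, normPdf_mul_normPdf, hσ, hz]

lemma normPdf_mul_normPdf_sub {a b : ℝ} (ha : 0 < a) (hb : 0 < b) (p q t : ℝ) :
    normPdf a (t - p) * normPdf b (q - t) =
      normPdf √(a ^ 2 + b ^ 2) (q - p) *
        normPdf (a * b / √(a ^ 2 + b ^ 2)) (t - (b ^ 2 * p + a ^ 2 * q) / (a ^ 2 + b ^ 2)) := by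
  have hs2 : √(a ^ 2 + b ^ 2) ^ 2 = a ^ 2 + b ^ 2 := sq_sqrt (by positivity)
  apply normPdf_mul_normPdf_eq_of
  · field_simp
  · rw [div_pow, div_pow, div_pow, div_pow, hs2, div_pow, hs2]
    field_simp
    ring

lemma lintegral_normPdf_mul_normPdf_sub {a b : ℝ} (ha : 0 < a) (hb : 0 < b) (p q : ℝ) :
    ∫⁻ t, ENNReal.ofReal (normPdf a (t - p)) * ENNReal.ofReal (normPdf b (q - t)) =
      ENNReal.ofReal (normPdf √(a ^ 2 + b ^ 2) (q - p)) := by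
  have hs : 0 < √(a ^ 2 + b ^ 2) := by positivity
  simp_rw [← ENNReal.ofReal_mul (normPdf_nonneg ha _), normPdf_mul_normPdf_sub ha hb p q,
    ENNReal.ofReal_mul (normPdf_nonneg hs _)]
  rw [lintegral_const_mul _ (by fun_prop), lintegral_normPdf_sub (by positivity), mul_one]

lemma bivDensity_eq {μ₁ μ₂ σ₁ σ₂ c : ℝ} (hD : σ₁ ^ 2 * σ₂ ^ 2 - c ^ 2 ≠ 0) (x y : ℝ) :
    bivDensity μ₁ μ₂ σ₁ σ₂ c x y =
      (2 * π)⁻¹ * (√(σ₁ ^ 2 * σ₂ ^ 2 - c ^ 2))⁻¹ *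
        exp (-(σ₂ ^ 2 * (x - μ₁) ^ 2 - 2 * c * (x - μ₁) * (y - μ₂) + σ₁ ^ 2 * (y - μ₂) ^ 2) /
          (2 * (σ₁ ^ 2 * σ₂ ^ 2 - c ^ 2))) := by
  have hdet : (!![σ₁ ^ 2, c; c, σ₂ ^ 2] : Matrix (Fin 2) (Fin 2) ℝ).det =
      σ₁ ^ 2 * σ₂ ^ 2 - c ^ 2 := by
    simp [Matrix.det_fin_two_of]; ring
  have hinv : (!![σ₁ ^ 2, c; c, σ₂ ^ 2] : Matrix (Fin 2) (Fin 2) ℝ)⁻¹ =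
      (σ₁ ^ 2 * σ₂ ^ 2 - c ^ 2)⁻¹ • !![σ₂ ^ 2, -c; -c, σ₁ ^ 2] := by
    rw [Matrix.inv_def, hdet, Matrix.adjugate_fin_two_of, Ring.inverse_eq_inv]
  rw [bivDensity, hdet, hinv]
  congr 2
  simp [Matrix.mulVec, dotProduct, Fin.sum_univ_two]
  field_simp
  ring

lemma bivDensity_swap {μ₁ μ₂ σ₁ σ₂ c : ℝ} (hD : σ₁ ^ 2 * σ₂ ^ 2 - c ^ 2 ≠ 0) (x y : ℝ) :
    bivDensity μ₁ μ₂ σ₁ σ₂ c x y = bivDensity μ₂ μ₁ σ₂ σ₁ c y x := by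
  rw [bivDensity_eq hD, bivDensity_eq (by rwa [mul_comm])]
  ring_nf

lemma bivDensity_eq_normPdf_fst_mul {μ₁ μ₂ σ₁ σ₂ c : ℝ} (h₁ : 0 < σ₁)
    (hc : c ^ 2 < σ₁ ^ 2 * σ₂ ^ 2) (x y : ℝ) :
    bivDensity μ₁ μ₂ σ₁ σ₂ c x y = normPdf σ₁ (x - μ₁) *
      normPdf √(σ₂ ^ 2 - c ^ 2 / σ₁ ^ 2) (y - (c * (x - μ₁) / σ₁ ^ 2 + μ₂)) := by
  have hD : 0 < σ₁ ^ 2 * σ₂ ^ 2 - c ^ 2 := by linarith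
  have hu := sq_sub_sq_div_sq_pos h₁ hc
  have hsqrt : σ₁ * √(σ₂ ^ 2 - c ^ 2 / σ₁ ^ 2) = √(σ₁ ^ 2 * σ₂ ^ 2 - c ^ 2) := by
    rw [← sqrt_sq h₁.le, ← sqrt_mul (sq_nonneg _), sqrt_sq h₁.le]
    congr 1
    field_simp
  rw [bivDensity_eq hD.ne', normPdf_mul_normPdf, hsqrt, div_pow, div_pow, sq_sqrt hu.le,
    div_eq_mul_inv _ (√_), show σ₂ ^ 2 - c ^ 2 / σ₁ ^ 2 = (σ₁ ^ 2 * σ₂ ^ 2 - c ^ 2) / σ₁ ^ 2 by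
      field_simp]
  have hD' : σ₂ ^ 2 * σ₁ ^ 2 - c ^ 2 ≠ 0 := by linarith
  congr 2
  field_simp
  ring

lemma bivDensity_eq_normPdf_snd_mul {μ₁ μ₂ σ₁ σ₂ c : ℝ} (h₂ : 0 < σ₂)
    (hc : c ^ 2 < σ₁ ^ 2 * σ₂ ^ 2) (x y : ℝ) :
    bivDensity μ₁ μ₂ σ₁ σ₂ c x y = normPdf σ₂ (y - μ₂) *
      normPdf √(σ₁ ^ 2 - c ^ 2 / σ₂ ^ 2) (x - (c * (y - μ₂) / σ₂ ^ 2 + μ₁)) := by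
  rw [bivDensity_swap (by linarith), bivDensity_eq_normPdf_fst_mul h₂ (by linarith)]

lemma measurable_bivDensity (μ₁ μ₂ σ₁ σ₂ c : ℝ) :
    Measurable fun v : ℝ × ℝ => bivDensity μ₁ μ₂ σ₁ σ₂ c v.1 v.2 := by
  unfold bivDensity
  fun_prop

noncomputable def bivNormal (μ₁ μ₂ σ₁ σ₂ c : ℝ) : Measure (ℝ × ℝ) :=
  volume.withDensity fun v => ENNReal.ofReal (bivDensity μ₁ μ₂ σ₁ σ₂ c v.1 v.2)

lemma bivNormal_prod_Iic {μ₁ μ₂ σ₁ σ₂ c : ℝ} (h₁ : 0 < σ₁) (hc : c ^ 2 < σ₁ ^ 2 * σ₂ ^ 2)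
    {A : Set ℝ} (hA : MeasurableSet A) (f : ℝ) :
    bivNormal μ₁ μ₂ σ₁ σ₂ c (A ×ˢ Iic f) = ∫⁻ x in A, ENNReal.ofReal (normPdf σ₁ (x - μ₁) *
      stdCdf ((f - (c * (x - μ₁) / σ₁ ^ 2 + μ₂)) / √(σ₂ ^ 2 - c ^ 2 / σ₁ ^ 2))) := by
  have hs : 0 < √(σ₂ ^ 2 - c ^ 2 / σ₁ ^ 2) := sqrt_pos.2 (sq_sub_sq_div_sq_pos h₁ hc)
  rw [bivNormal, withDensity_apply _ (hA.prod measurableSet_Iic), Measure.volume_eq_prod,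
    ← Measure.prod_restrict,
    lintegral_prod _ (measurable_bivDensity ..).ennreal_ofReal.aemeasurable]
  simp only [bivDensity_eq_normPdf_fst_mul h₁ hc, ENNReal.ofReal_mul (normPdf_nonneg h₁ _),
    lintegral_const_mul' _ _ ENNReal.ofReal_ne_top, setLIntegral_normPdf_sub_Iic hs]

lemma map_snd_bivNormal {μ₁ μ₂ σ₁ σ₂ c : ℝ} (h₂ : 0 < σ₂) (hc : c ^ 2 < σ₁ ^ 2 * σ₂ ^ 2) :
    (bivNormal μ₁ μ₂ σ₁ σ₂ c).map Prod.snd = gaussianReal μ₂ (σ₂ ^ 2).toNNReal := by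
  have hs : 0 < √(σ₁ ^ 2 - c ^ 2 / σ₂ ^ 2) :=
    sqrt_pos.2 (sq_sub_sq_div_sq_pos h₂ (by linarith))
  ext B hB
  rw [Measure.map_apply measurable_snd hB, gaussianReal_eq_withDensity_normPdf h₂,
    withDensity_apply _ hB, ← univ_prod, bivNormal,
    withDensity_apply _ (MeasurableSet.univ.prod hB),
    Measure.volume_eq_prod, ← Measure.prod_restrict, Measure.restrict_univ,
    lintegral_prod_symm _ (measurable_bivDensity ..).ennreal_ofReal.aemeasurable]
  simp only [bivDensity_eq_normPdf_snd_mul h₂ hc, ENNReal.ofReal_mul (normPdf_nonneg h₂ _),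
    lintegral_const_mul' _ _ ENNReal.ofReal_ne_top, lintegral_normPdf_sub hs, mul_one]

lemma map_add_prod_withDensity {p : ℝ × ℝ → ℝ≥0∞} {q : ℝ → ℝ≥0∞} (hp : Measurable p)
    (hq : Measurable q) :
    ((volume.withDensity p).prod (volume.withDensity q)).map (fun v => (v.1.1 + v.2, v.1.2)) =
      volume.withDensity fun w => ∫⁻ x, p (x, w.2) * q (w.1 - x) := by
  ext s hs
  set φ := s.indicator (1 : ℝ × ℝ → ℝ≥0∞)
  have hφ : Measurable φ := measurable_one.indicator hs
  calc _ = ∫⁻ v, p v * ∫⁻ e, q e * φ (v.1 + e, v.2) := by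
        rw [← lintegral_indicator_one hs, lintegral_map hφ (by fun_prop),
          lintegral_prod _ (by fun_prop), lintegral_withDensity_eq_lintegral_mul _ hp
            (Measurable.lintegral_prod_right'
              (f := fun u : (ℝ × ℝ) × ℝ => φ (u.1.1 + u.2, u.1.2)) (by fun_prop))]
        refine lintegral_congr fun v => ?_
        rw [Pi.mul_apply, lintegral_withDensity_eq_lintegral_mul _ hq (by fun_prop)]
        rfl
    _ = ∫⁻ y, ∫⁻ x, ∫⁻ z, p (x, y) * q (z - x) * φ (z, y) := by
        rw [Measure.volume_eq_prod, lintegral_prod_symm _ ?_]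
        · refine lintegral_congr fun y => lintegral_congr fun x => ?_
          rw [← lintegral_sub_right_eq_self _ x,
            ← lintegral_const_mul _ (f := fun z => q (z - x) * φ (x + (z - x), y)) (by fun_prop)]
          simp [mul_assoc]
        · exact (hp.mul (Measurable.lintegral_prod_right'
            (f := fun u : (ℝ × ℝ) × ℝ => q u.2 * φ (u.1.1 + u.2, u.1.2))
            (by fun_prop))).aemeasurable
    _ = ∫⁻ y, ∫⁻ z, φ (z, y) * ∫⁻ x, p (x, y) * q (z - x) := by
        refine lintegral_congr fun y => ?_
        rw [lintegral_lintegral_swap (by fun_prop)]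
        refine lintegral_congr fun z => ?_
        rw [← lintegral_const_mul _ (by fun_prop)]
        exact lintegral_congr fun x => by ring
    _ = _ := by
        rw [withDensity_apply _ hs, ← lintegral_indicator hs, Measure.volume_eq_prod,
          lintegral_prod_symm _ ?_]
        · refine lintegral_congr fun y => lintegral_congr fun z => ?_
          by_cases h : (z, y) ∈ s <;> simp [φ, h]
        · refine (Measurable.indicator ?_ hs).aemeasurable
          exact Measurable.lintegral_prod_left'
            (f := fun u : ℝ × ℝ × ℝ => p (u.1, u.2.2) * q (u.2.1 - u.1)) (by fun_prop)

lemma lintegral_bivDensity_mul_normPdf {μ₁ μ₂ σ₁ σ₂ c σₙ : ℝ} (h₂ : 0 < σ₂) (hₙ : 0 < σₙ)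
    (hc : c ^ 2 < σ₁ ^ 2 * σ₂ ^ 2) (z y : ℝ) :
    ∫⁻ x, ENNReal.ofReal (bivDensity μ₁ μ₂ σ₁ σ₂ c x y) * ENNReal.ofReal (normPdf σₙ (z - x)) =
      ENNReal.ofReal (bivDensity μ₁ μ₂ √(σ₁ ^ 2 + σₙ ^ 2) σ₂ c z y) := by
  have hs := sq_sub_sq_div_sq_pos h₂ (by linarith : c ^ 2 < σ₂ ^ 2 * σ₁ ^ 2)
  have hvar : √(√(σ₁ ^ 2 - c ^ 2 / σ₂ ^ 2) ^ 2 + σₙ ^ 2) =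
      √(√(σ₁ ^ 2 + σₙ ^ 2) ^ 2 - c ^ 2 / σ₂ ^ 2) := by
    rw [sq_sqrt hs.le, sq_sqrt (by positivity)]
    ring_nf
  simp only [bivDensity_eq_normPdf_snd_mul h₂ hc,
    bivDensity_eq_normPdf_snd_mul h₂ (sq_lt_sqrt_add_sq_sq_mul_sq h₂ hₙ hc),
    ENNReal.ofReal_mul (normPdf_nonneg h₂ _), mul_assoc,
    lintegral_const_mul' _ _ ENNReal.ofReal_ne_top]
  rw [lintegral_normPdf_mul_normPdf_sub (sqrt_pos.2 hs) hₙ, hvar]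

lemma map_add_prod_gaussianReal_bivNormal {μ₁ μ₂ σ₁ σ₂ c σₙ : ℝ} (h₂ : 0 < σ₂) (hₙ : 0 < σₙ)
    (hc : c ^ 2 < σ₁ ^ 2 * σ₂ ^ 2) :
    ((bivNormal μ₁ μ₂ σ₁ σ₂ c).prod (gaussianReal 0 (σₙ ^ 2).toNNReal)).map
      (fun v => (v.1.1 + v.2, v.1.2)) = bivNormal μ₁ μ₂ √(σ₁ ^ 2 + σₙ ^ 2) σ₂ c := by
  rw [gaussianReal_eq_withDensity_normPdf hₙ, bivNormal,
    map_add_prod_withDensity (measurable_bivDensity ..).ennreal_ofReal (by fun_prop)]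
  simp only [sub_zero, lintegral_bivDensity_mul_normPdf h₂ hₙ hc]
  rfl

lemma map_add_noise_eq_bivNormal {Ω : Type*} [MeasurableSpace Ω] {P : Measure Ω}
    [IsFiniteMeasure P] {X Y ε : Ω → ℝ} {μ₁ μ₂ σ₁ σ₂ c σₙ : ℝ} (h₂ : 0 < σ₂) (hₙ : 0 < σₙ)
    (hc : c ^ 2 < σ₁ ^ 2 * σ₂ ^ 2) (hX : Measurable X) (hY : Measurable Y) (hε : Measurable ε)
    (hXY : P.map (fun ω => (X ω, Y ω)) = bivNormal μ₁ μ₂ σ₁ σ₂ c)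
    (hεlaw : P.map ε = gaussianReal 0 (σₙ ^ 2).toNNReal)
    (hindep : IndepFun (fun ω => (X ω, Y ω)) ε P) :
    P.map (fun ω => (X ω + ε ω, Y ω)) = bivNormal μ₁ μ₂ √(σ₁ ^ 2 + σₙ ^ 2) σ₂ c := by
  rw [show (fun ω => (X ω + ε ω, Y ω)) =
      (fun v : (ℝ × ℝ) × ℝ => (v.1.1 + v.2, v.1.2)) ∘ fun ω => ((X ω, Y ω), ε ω) from rfl,
    ← Measure.map_map (by fun_prop) ((hX.prodMk hY).prodMk hε),
    (indepFun_iff_map_prod_eq_prod_map_map (hX.prodMk hY).aemeasurable hε.aemeasurable).1 hindep,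
    hXY, hεlaw, map_add_prod_gaussianReal_bivNormal h₂ hₙ hc]

lemma integrable_normPdf_sub_mul_stdCdf {σ : ℝ} (hσ : 0 < σ) (μ : ℝ) {h : ℝ → ℝ}
    (hh : Measurable h) : Integrable fun x => normPdf σ (x - μ) * stdCdf (h x) := by
  refine Integrable.mono' (g := fun x => normPdf σ (x - μ)) ?_ (by fun_prop)
    (ae_of_all _ fun x => ?_)
  · simp_rw [normPdf_sub_eq_gaussianPDFReal hσ]
    exact integrable_gaussianPDFReal _ _
  · rw [norm_mul, Real.norm_of_nonneg (normPdf_nonneg hσ _),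
      Real.norm_of_nonneg (stdCdf_nonneg _)]
    exact mul_le_of_le_one_right (normPdf_nonneg hσ _) (stdCdf_le_one _)

end

theorem lemma1_noisy_general {Ω : Type*} [MeasurableSpace Ω] (ℙ : Measure Ω) [IsProbabilityMeasure ℙ]
    (X Y ε : Ω → ℝ) (μm μM σm σM c σn fstar : ℝ)
    (hσM : 0 < σM) (hσn : 0 < σn) (hc : c ^ 2 < σm ^ 2 * σM ^ 2)
    (hX : Measurable X) (hY : Measurable Y) (hε : Measurable ε)
    (hXY : Measure.map (fun ω => (X ω, Y ω)) ℙ =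
      (volume : Measure (ℝ × ℝ)).withDensity
        (fun v => ENNReal.ofReal (bivDensity μm μM σm σM c v.1 v.2)))
    (hεlaw : Measure.map ε ℙ = ProbabilityTheory.gaussianReal 0 (σn ^ 2).toNNReal)
    (hindep : ProbabilityTheory.IndepFun (fun ω => (X ω, Y ω)) ε ℙ) :
    ∀ A : Set ℝ, MeasurableSet A →
      ℙ {ω | X ω + ε ω ∈ A ∧ Y ω ≤ fstar} / ℙ {ω | Y ω ≤ fstar} =
        ENNReal.ofReal (∫ x in A,
          stdCdf ((fstar - condMeanNoisy μm μM σm σn c x) / condSdNoisy σm σM σn c) *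
            stdPdf ((x - μm) / sigmaTilde σm σn) /
              (sigmaTilde σm σn * stdCdf ((fstar - μM) / σM))) := by
  intro A hA
  have hT : 0 < sigmaTilde σm σn := sqrt_pos.2 (by positivity)
  have hcT : c ^ 2 < sigmaTilde σm σn ^ 2 * σM ^ 2 := sq_lt_sqrt_add_sq_sq_mul_sq hσM hσn hc
  have hnum : ℙ {ω | X ω + ε ω ∈ A ∧ Y ω ≤ fstar} = ∫⁻ x in A,
      ENNReal.ofReal (normPdf (sigmaTilde σm σn) (x - μm) *
        stdCdf ((fstar - condMeanNoisy μm μM σm σn c x) / condSdNoisy σm σM σn c)) := by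
    rw [show {ω | X ω + ε ω ∈ A ∧ Y ω ≤ fstar} =
        (fun ω => (X ω + ε ω, Y ω)) ⁻¹' (A ×ˢ Iic fstar) from rfl,
      ← Measure.map_apply (by fun_prop) (hA.prod measurableSet_Iic),
      map_add_noise_eq_bivNormal hσM hσn hc hX hY hε hXY hεlaw hindep]
    exact bivNormal_prod_Iic hT hcT hA fstar
  have hden : ℙ {ω | Y ω ≤ fstar} = ENNReal.ofReal (stdCdf ((fstar - μM) / σM)) := by
    rw [← gaussianReal_Iic hσM, ← map_snd_bivNormal hσM hc, bivNormal, ← hXY,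
      Measure.map_map measurable_snd (hX.prodMk hY),
      Measure.map_apply (by fun_prop) measurableSet_Iic]
    rfl
  rw [hnum, hden, ← ofReal_integral_eq_lintegral_ofReal
      (integrable_normPdf_sub_mul_stdCdf hT μm (by unfold condMeanNoisy; fun_prop)).integrableOn
      (ae_of_all _ fun x => mul_nonneg (normPdf_nonneg hT _) (stdCdf_nonneg _)),
    ← ENNReal.ofReal_div_of_pos (stdCdf_pos _), ← integral_div]
  congr 2 with x
  rw [normPdf]
  ring

/-- Noisy-observation analogue of Lemma 1: if `(X, Y)` is bivariate normal with mean `(μm, μM)`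
and covariance `[[σm², c], [c, σM²]]` and `ε ∼ N(0, σn²)` is independent of `(X, Y)`, then the
conditional distribution of `X + ε` given `{Y ≤ f_*}` has density
`x ↦ Φ((f_* − u_n(x))/s_n) φ((x − μm)/σ̃) / (σ̃ Φ((f_* − μM)/σM))`. -/
theorem lemma1_noisy {Ω : Type*} [MeasurableSpace Ω] (ℙ : Measure Ω) [IsProbabilityMeasure ℙ]
    (X Y ε : Ω → ℝ) (μm μM σm σM c σn fstar : ℝ)
    (hσm : 0 < σm) (hσM : 0 < σM) (hσn : 0 < σn) (hc : c ^ 2 < σm ^ 2 * σM ^ 2)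
    (hX : Measurable X) (hY : Measurable Y) (hε : Measurable ε)
    (hXY : Measure.map (fun ω => (X ω, Y ω)) ℙ =
      (volume : Measure (ℝ × ℝ)).withDensity
        (fun v => ENNReal.ofReal (bivDensity μm μM σm σM c v.1 v.2)))
    (hεlaw : Measure.map ε ℙ = ProbabilityTheory.gaussianReal 0 (σn ^ 2).toNNReal)
    (hindep : ProbabilityTheory.IndepFun (fun ω => (X ω, Y ω)) ε ℙ) :
    ∀ A : Set ℝ, MeasurableSet A →
      ℙ {ω | X ω + ε ω ∈ A ∧ Y ω ≤ fstar} / ℙ {ω | Y ω ≤ fstar} =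
        ENNReal.ofReal (∫ x in A,
          stdCdf ((fstar - condMeanNoisy μm μM σm σn c x) / condSdNoisy σm σM σn c) *
            stdPdf ((x - μm) / sigmaTilde σm σn) /
              (sigmaTilde σm σn * stdCdf ((fstar - μM) / σM))) :=
  lemma1_noisy_general ℙ X Y ε μm μM σm σM c σn fstar hσM hσn hc hX hY hε hXY hεlaw hindep
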